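/- If G is a randomly k-dimensional graph with k ≥ 4, then G contains no two adjacent vertices that both have degree 2. -/

import Mathlib

/-!
A randomly `k`-dimensional graph on `n` vertices with `k ≥ 4` is complete. Each `(k - 1)`-set
fails to resolve some pair `x ≠ y`, and since every `k`-set resolves, it is then exactly the set of
vertices equidistant from `x` and `y`. Hence `n.choose (k - 1) ≤ n.choose 2`, which forces
`n ≤ k + 1`, while `β(G) ≤ n - 1` gives `n ≥ k + 1`. With `n = k + 1` any two vertices are twins,
so the connected graph is complete and every degree is `k ≥ 4`.
-/

open SimpleGraph

/-- `W` is a resolving set for `G`: distinct vertices have distinct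
metric representations with respect to `W`. -/
def IsResolvingSet {V : Type*} (G : SimpleGraph V) (W : Finset V) : Prop :=
  ∀ u v : V, u ≠ v → ∃ w ∈ W, G.dist u w ≠ G.dist v w

/-- The metric dimension `β(G)`: minimum cardinality of a resolving set. -/
noncomputable def metricDim {V : Type*} [Fintype V] (G : SimpleGraph V) : ℕ :=
  sInf {k | ∃ W : Finset V, W.card = k ∧ IsResolvingSet G W}

/-- A (metric) basis of `G`: a resolving set of minimum cardinality. -/
def IsMetricBasis {V : Type*} [Fintype V] (G : SimpleGraph V) (B : Finset V) : Prop :=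
  IsResolvingSet G B ∧ B.card = metricDim G

/-- The resolving number `res(G)`: the minimum `k` such that every `k`-set of
vertices is a resolving set. -/
noncomputable def resolvingNumber {V : Type*} [Fintype V] (G : SimpleGraph V) : ℕ :=
  sInf {k | ∀ W : Finset V, W.card = k → IsResolvingSet G W}

/-- The basis number `bas(G)`: the maximum `r` such that every `r`-set of
vertices is contained in some basis. -/
noncomputable def basisNumber {V : Type*} [Fintype V] (G : SimpleGraph V) : ℕ :=
  sSup {r | r ≤ Fintype.card V ∧
    ∀ S : Finset V, S.card = r → ∃ B : Finset V, S ⊆ B ∧ IsMetricBasis G B}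

/-- `G` is randomly `k`-dimensional: `β(G) = k` and every `k`-set of vertices
is a basis of `G`. -/
def RandomlyDimensional {V : Type*} [Fintype V] (G : SimpleGraph V) (k : ℕ) : Prop :=
  metricDim G = k ∧ ∀ W : Finset V, W.card = k → IsMetricBasis G W

namespace Nat

theorem choose_le_choose_of_le_of_le_half {n a b : ℕ} (hab : a ≤ b) (hb : b ≤ n / 2) :
    n.choose a ≤ n.choose b := by
  induction b, hab using Nat.le_induction with
  | base => rfl
  | succ b _ ih => exact (ih (by omega)).trans (choose_le_succ_of_lt_half_left (by omega))

theorem choose_le_choose_of_le_of_add_le {n a b : ℕ} (hab : a ≤ b) (hn : a + b ≤ n) :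
    n.choose a ≤ n.choose b := by
  rcases le_or_gt b (n / 2) with hb | hb
  · exact choose_le_choose_of_le_of_le_half hab hb
  · rw [← choose_symm (by omega : b ≤ n)]
    exact choose_le_choose_of_le_of_le_half (by omega) (by omega)

theorem choose_two_lt_choose {n j : ℕ} (hj : 3 ≤ j) (hn : j + 3 ≤ n) :
    n.choose 2 < n.choose j := by
  have h23 : n.choose 2 < n.choose 3 := by
    have hpos : 0 < n.choose 2 := choose_pos (by omega)
    have hrec : n.choose 3 * 3 = n.choose 2 * (n - 2) := choose_succ_right_eq n 2
    have hn2 : 4 ≤ n - 2 := by omega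
    nlinarith
  exact h23.trans_le (choose_le_choose_of_le_of_add_le hj (by omega))

end Nat

section Resolving

variable {V : Type*} [Fintype V] {G : SimpleGraph V}

variable (G) in
noncomputable def equidistantFinset (x y : V) : Finset V :=
  {w | G.dist x w = G.dist y w}

theorem equidistantFinset_comm (x y : V) : equidistantFinset G x y = equidistantFinset G y x := by
  ext w
  simp only [equidistantFinset, Finset.mem_filter, Finset.mem_univ, true_and, eq_comm]

theorem left_notMem_equidistantFinset (hG : G.Connected) {x y : V} (hxy : x ≠ y) :
    x ∉ equidistantFinset G x y := by
  simpa [equidistantFinset, eq_comm] using (hG.pos_dist_of_ne hxy.symm).ne'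

theorem isResolvingSet_iff {W : Finset V} :
    IsResolvingSet G W ↔ ∀ x y, x ≠ y → ¬ W ⊆ equidistantFinset G x y := by
  simp [IsResolvingSet, Finset.subset_iff, equidistantFinset]

theorem metricDim_le_card {W : Finset V} (hW : IsResolvingSet G W) : metricDim G ≤ W.card :=
  Nat.sInf_le ⟨W, rfl, hW⟩

theorem isResolvingSet_univ_erase [DecidableEq V] (hG : G.Connected) (u : V) :
    IsResolvingSet G (Finset.univ.erase u) := by
  intro x y hxy
  by_cases hxu : x = u
  · refine ⟨y, by simp [← hxu, hxy.symm], ?_⟩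
    simpa using (hG.pos_dist_of_ne hxy).ne'
  · refine ⟨x, by simp [hxu], ?_⟩
    simpa using (hG.pos_dist_of_ne hxy.symm).ne

theorem metricDim_lt_card (hG : G.Connected) : metricDim G < Fintype.card V := by
  classical
  obtain ⟨u⟩ := hG.nonempty
  have := metricDim_le_card (isResolvingSet_univ_erase hG u)
  rw [Finset.card_erase_of_mem (Finset.mem_univ u), Finset.card_univ] at this
  have := Fintype.card_pos_iff.mpr ⟨u⟩
  omega

end Resolving

namespace RandomlyDimensional

variable {V : Type*} [Fintype V] {G : SimpleGraph V} {k : ℕ}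

theorem isResolvingSet (h : RandomlyDimensional G k) {W : Finset V} (hW : W.card = k) :
    IsResolvingSet G W :=
  (h.2 W hW).1

theorem not_isResolvingSet (h : RandomlyDimensional G k) {W : Finset V} (hW : W.card < k) :
    ¬ IsResolvingSet G W := fun hres => (h.1 ▸ metricDim_le_card hres).not_gt hW

theorem card_equidistantFinset_lt (h : RandomlyDimensional G k) {x y : V} (hxy : x ≠ y) :
    (equidistantFinset G x y).card < k := by
  by_contra! hle
  obtain ⟨W, hWsub, hWcard⟩ := Finset.exists_subset_card_eq hle
  exact isResolvingSet_iff.mp (h.isResolvingSet hWcard) x y hxy hWsub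

theorem exists_eq_equidistantFinset (h : RandomlyDimensional G k) {W : Finset V}
    (hW : W.card + 1 = k) : ∃ x y, x ≠ y ∧ W = equidistantFinset G x y := by
  have hnres := h.not_isResolvingSet (W := W) (by omega)
  simp only [isResolvingSet_iff, not_forall, not_not] at hnres
  obtain ⟨x, y, hxy, hWsub⟩ := hnres
  exact ⟨x, y, hxy, Finset.eq_of_subset_of_card_le hWsub
    (by have := h.card_equidistantFinset_lt hxy; omega)⟩

theorem choose_pred_le_choose_two (h : RandomlyDimensional G k) (hk : 1 ≤ k) :
    (Fintype.card V).choose (k - 1) ≤ (Fintype.card V).choose 2 := by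
  classical
  let f : Sym2 V → Finset V := Sym2.lift ⟨equidistantFinset G, equidistantFinset_comm⟩
  have hsurj : Set.SurjOn f (Finset.univ.offDiag.image Sym2.mk.uncurry : Finset (Sym2 V))
      (Finset.univ.powersetCard (k - 1) : Finset (Finset V)) := by
    intro W hW
    rw [Finset.mem_coe, Finset.mem_powersetCard] at hW
    obtain ⟨x, y, hxy, rfl⟩ := h.exists_eq_equidistantFinset (W := W) (by omega)
    exact ⟨s(x, y), Finset.mem_image.mpr ⟨(x, y), by simp [hxy], rfl⟩, rfl⟩
  have := Finset.card_le_card_of_surjOn f hsurj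
  rwa [Finset.card_powersetCard, Sym2.card_image_offDiag, Finset.card_univ] at this

theorem card_le_succ (h : RandomlyDimensional G k) (hk : 4 ≤ k) : Fintype.card V ≤ k + 1 := by
  by_contra! hcard
  have := h.choose_pred_le_choose_two (by omega)
  have := Nat.choose_two_lt_choose (n := Fintype.card V) (j := k - 1) (by omega) (by omega)
  omega

theorem succ_le_card (h : RandomlyDimensional G k) (hG : G.Connected) :
    k + 1 ≤ Fintype.card V :=
  h.1 ▸ metricDim_lt_card hG

/-- With `k + 1` vertices, the complement of any pair is a `(k - 1)`-set, so it is the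
equidistant set of some pair outside it, which can only be the pair itself. -/
theorem dist_eq_of_card_eq_succ (h : RandomlyDimensional G k) (hG : G.Connected)
    (hcard : Fintype.card V = k + 1) {x y w : V} (hxy : x ≠ y) (hwx : w ≠ x) (hwy : w ≠ y) :
    G.dist x w = G.dist y w := by
  classical
  have hpair : ({x, y} : Finset V).card = 2 := Finset.card_pair hxy
  have hW : ({x, y}ᶜ : Finset V).card + 1 = k := by
    have := Finset.card_le_univ ({x, y} : Finset V)
    rw [Finset.card_compl]
    omega
  obtain ⟨a, b, hab, hWeq⟩ := h.exists_eq_equidistantFinset hW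
  have ha : a = x ∨ a = y := by
    simpa [← hWeq, or_iff_not_imp_left] using left_notMem_equidistantFinset hG hab
  have hb : b = x ∨ b = y := by
    simpa [equidistantFinset_comm, ← hWeq, or_iff_not_imp_left] using
      left_notMem_equidistantFinset hG hab.symm
  have hw : G.dist a w = G.dist b w := by
    have : w ∈ ({x, y}ᶜ : Finset V) := by simp [hwx, hwy]
    simpa [hWeq, equidistantFinset] using this
  rcases ha with rfl | rfl <;> rcases hb with rfl | rfl
  all_goals first | exact absurd rfl hab | exact hw | exact hw.symm

theorem isUniversal_of_card_eq_succ (h : RandomlyDimensional G k) (hG : G.Connected)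
    (hcard : Fintype.card V = k + 1) (v : V) : G.IsUniversal v := by
  intro w hvw
  have : Nontrivial V := ⟨⟨v, w, hvw⟩⟩
  obtain ⟨u, hvu⟩ : ∃ u, G.Adj v u := by simpa [IsIsolated] using hG.preconnected.not_isIsolated v
  by_cases huw : u = w
  · exact huw ▸ hvu
  · rw [← dist_eq_one_iff_adj, dist_comm,
      h.dist_eq_of_card_eq_succ hG hcard (Ne.symm huw) hvw hvu.ne, dist_comm,
      dist_eq_one_iff_adj]
    exact hvu

end RandomlyDimensional

theorem randomlyDimensional_no_adjacent_degree_two {V : Type*} [Fintype V] (G : SimpleGraph V)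
    [DecidableRel G.Adj] (hG : G.Connected) (k : ℕ) (hk : 4 ≤ k)
    (h : RandomlyDimensional G k) :
    ¬ ∃ u v : V, G.Adj u v ∧ G.degree u = 2 ∧ G.degree v = 2 := by
  rintro ⟨u, -, -, hu, -⟩
  have hcard : Fintype.card V = k + 1 := le_antisymm (h.card_le_succ hk) (h.succ_le_card hG)
  have hdeg : G.degree u = Fintype.card V - 1 :=
    G.degree_eq_card_sub_one u |>.mpr (h.isUniversal_of_card_eq_succ hG hcard u)
  omega
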